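/- Let m ≥ 2. For an angle θ ∈ ℝ let v(θ) = cos(θ/2)|0⟩ + sin(θ/2)|1⟩ ∈ ℂ², with rank-one projector Π⁰(θ) = v(θ)v(θ)* and Π¹(θ) = I − Π⁰(θ). Let |φ₊⟩ = (|00⟩ + |11⟩)/√2 and define, for x, y ∈ {1,…,m} and a, b ∈ {0,1}, P(a,b|x,y) = ⟨φ₊| Π^a(θ_x) ⊗ Π^b(θ'_y) |φ₊⟩, where θ_x = π(x−1)/m and θ'_y = π(2y−1)/(2m). Then the chained Bell expression satisfies Σ_{(x,y): x=y or x=y+1} P(a⊕b=1|x,y) + P(a⊕b=0|1,m) = 2m·sin²(π/(4m)); in particular the value of the chained Bell expression tends to its algebraic minimum 0 as m → ∞. -/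
import Mathlib
set_option maxRecDepth 10000


open Matrix Kronecker Finset Real

/-- The qubit state `v(θ) = cos(θ/2)|0⟩ + sin(θ/2)|1⟩`. -/
noncomputable def ketv (θ : ℝ) : Fin 2 → ℂ :=
  fun i => if i = 0 then ((Real.cos (θ / 2) : ℝ) : ℂ) else ((Real.sin (θ / 2) : ℝ) : ℂ)

/-- The projectors `Π⁰(θ) = v(θ)v(θ)*` (for outcome `false`) and
`Π¹(θ) = I − Π⁰(θ)` (for outcome `true`). -/
noncomputable def projv (θ : ℝ) (a : Bool) : Matrix (Fin 2) (Fin 2) ℂ :=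
  if a then (1 : Matrix (Fin 2) (Fin 2) ℂ) - Matrix.of (fun i j => ketv θ i * star (ketv θ j))
  else Matrix.of (fun i j => ketv θ i * star (ketv θ j))

/-- The maximally entangled state `|φ₊⟩ = (|00⟩ + |11⟩)/√2`. -/
noncomputable def phiPlus : Fin 2 × Fin 2 → ℂ :=
  fun p => if p = (0, 0) ∨ p = (1, 1) then ((Real.sqrt 2 : ℂ))⁻¹ else 0

/-- The quantum behaviour `P(a,b|x,y) = ⟨φ₊| Π^a(θ_x) ⊗ Π^b(θ'_y) |φ₊⟩` for the chained
Bell test: the input `x : Fin m` encodes the setting `x+1 ∈ {1,…,m}`, with angles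
`θ_x = π(x−1)/m` for Alice and `θ'_y = π(2y−1)/(2m)` for Bob. -/
noncomputable def chainP (m : ℕ) (x y : Fin m) (a b : Bool) : ℂ :=
  star phiPlus ⬝ᵥ
    (((projv (Real.pi * x.val / m) a) ⊗ₖ (projv (Real.pi * (2 * y.val + 1) / (2 * m)) b))
      *ᵥ phiPlus)

lemma key (θ θ' : ℝ) (a b : Bool) :
    star phiPlus ⬝ᵥ ((projv θ a ⊗ₖ projv θ' b) *ᵥ phiPlus)
    = (((if a = b then Real.cos ((θ - θ')/2) else Real.sin ((θ - θ')/2))^2 / 2 : ℝ) : ℂ) := by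
  have h2 : ((Real.sqrt 2 : ℝ) : ℂ)⁻¹ = (((Real.sqrt 2)⁻¹ : ℝ) : ℂ) := by push_cast; ring
  have hs : (Real.sqrt 2)⁻¹ * (Real.sqrt 2)⁻¹ = 2⁻¹ := by
    rw [← mul_inv, Real.mul_self_sqrt (by norm_num : (0:ℝ) ≤ 2)]
  have hc : Real.cos ((θ - θ')/2) = Real.cos (θ/2) * Real.cos (θ'/2) + Real.sin (θ/2) * Real.sin (θ'/2) := by
    rw [show (θ - θ')/2 = θ/2 - θ'/2 by ring, Real.cos_sub]
  have hsx : Real.sin ((θ - θ')/2) = Real.sin (θ/2) * Real.cos (θ'/2) - Real.cos (θ/2) * Real.sin (θ'/2) := by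
    rw [show (θ - θ')/2 = θ/2 - θ'/2 by ring, Real.sin_sub]
  have p1 := Real.sin_sq_add_cos_sq (θ/2)
  have p2 := Real.sin_sq_add_cos_sq (θ'/2)
  set c := Real.cos (θ/2)
  set s := Real.sin (θ/2)
  set c' := Real.cos (θ'/2)
  set s' := Real.sin (θ'/2)
  cases a <;> cases b <;>
    (simp only [projv, phiPlus, ketv, dotProduct, mulVec, Fintype.sum_prod_type,
      Fin.sum_univ_two, kroneckerMap_apply, Pi.star_apply, Matrix.sub_apply,
      Matrix.one_apply, Matrix.of_apply, if_true, if_false, Bool.false_eq_true,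
      Prod.mk.injEq, one_ne_zero, zero_ne_one, and_self, and_false, false_and,
      or_false, false_or, true_or, or_true, star_zero, mul_zero, zero_mul,
      add_zero, zero_add, h2, Complex.star_def, Complex.conj_ofReal, ite_true, ite_false]
     simp only [map_zero, zero_mul, add_zero, zero_add, Bool.true_eq_false, if_false, if_true]
     try rw [hc]
     try rw [hsx]
     norm_cast)
  · linear_combination ((c*c' + s*s')^2) * hs
  · linear_combination (c^2 + s^2 - (c*c'+s*s')^2) * hs - ((c^2+s^2)/2) * p2
  · linear_combination (c'^2 + s'^2 - (c*c'+s*s')^2) * hs - ((c'^2+s'^2)/2) * p1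
  · linear_combination ((c*c'+s*s')^2 - (s^2+c^2-1) - (s'^2+c'^2-1)) * hs - (1/2) * p1 - (1/2) * p2

lemma chainP_eq (m : ℕ) (x y : Fin m) (a b : Bool) :
    chainP m x y a b
    = (((if a = b then Real.cos ((Real.pi * x.val / m - Real.pi * (2 * y.val + 1) / (2 * m))/2)
         else Real.sin ((Real.pi * x.val / m - Real.pi * (2 * y.val + 1) / (2 * m))/2))^2 / 2 : ℝ) : ℂ) := by
  exact key _ _ a b

lemma card_diag (m : ℕ) :
    ((Finset.univ : Finset (Fin m × Fin m)).filter (fun p => p.1 = p.2)).card = m := by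
  rw [show ((Finset.univ : Finset (Fin m × Fin m)).filter (fun p => p.1 = p.2))
      = (Finset.univ : Finset (Fin m)).diag by
    ext p; simp [Finset.mem_diag]]
  simp [Finset.diag_card]

lemma card_super (m : ℕ) (hm : 1 ≤ m) :
    ((Finset.univ : Finset (Fin m × Fin m)).filter (fun p => p.1.val = p.2.val + 1)).card
      = m - 1 := by
  rw [← Finset.card_range (m - 1)]
  refine Finset.card_bij' (fun p _ => p.2.val)
    (fun k _ => (⟨(k + 1) % m, Nat.mod_lt _ (by omega)⟩, ⟨k % m, Nat.mod_lt _ (by omega)⟩))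
    ?_ ?_ ?_ ?_
  · intro p hp
    simp only [Finset.mem_filter, Finset.mem_univ, true_and] at hp
    have := p.1.isLt
    exact Finset.mem_range.mpr (show p.2.val < m - 1 by omega)
  · intro k hk
    have hk' := Finset.mem_range.mp hk
    simp only [Finset.mem_filter, Finset.mem_univ, true_and]
    rw [Nat.mod_eq_of_lt (by omega), Nat.mod_eq_of_lt (by omega)]
  · intro p hp
    simp only [Finset.mem_filter, Finset.mem_univ, true_and] at hp
    have h1 := p.1.isLt
    have h2 := p.2.isLt
    ext
    · simp only [Nat.mod_eq_of_lt (by omega : p.2.val + 1 < m)]; omega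
    · simp only [Nat.mod_eq_of_lt (by omega : p.2.val < m)]
  · intro k hk
    have hk' := Finset.mem_range.mp hk
    simp [Nat.mod_eq_of_lt (by omega : k < m)]

lemma card_filter_total (m : ℕ) (hm : 1 ≤ m) :
    ((Finset.univ : Finset (Fin m × Fin m)).filter
      (fun p => p.1 = p.2 ∨ p.1.val = p.2.val + 1)).card = 2 * m - 1 := by
  rw [Finset.filter_or, Finset.card_union_of_disjoint]
  · rw [card_diag, card_super m hm]; omega
  · rw [Finset.disjoint_filter]
    intro p _ h1 h2
    rw [h1] at h2; omega

/-- **Quantum value of the chained Bell expression.** The optimal quantum strategy on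
`|φ₊⟩` gives the chained Bell expression the value `2m·sin²(π/(4m))`; in particular the
value of the chained Bell expression tends to its algebraic minimum `0` as `m → ∞`. -/
theorem chained_bell_quantum_value (m : ℕ) (hm : 2 ≤ m) :
    ((∑ p ∈ Finset.univ.filter
          (fun p : Fin m × Fin m => p.1 = p.2 ∨ p.1.val = p.2.val + 1),
        (chainP m p.1 p.2 true false + chainP m p.1 p.2 false true))
      + (chainP m ⟨0, by omega⟩ ⟨m - 1, by omega⟩ true true
         + chainP m ⟨0, by omega⟩ ⟨m - 1, by omega⟩ false false)
      = ((2 * m * (Real.sin (Real.pi / (4 * m))) ^ 2 : ℝ) : ℂ)) ∧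
    Filter.Tendsto (fun m : ℕ => 2 * (m : ℝ) * (Real.sin (Real.pi / (4 * m))) ^ 2)
      Filter.atTop (nhds 0) := by
  constructor
  · have hm0 : (m : ℝ) ≠ 0 := by positivity
    -- each filtered term is constant
    have hconst : ∀ p ∈ Finset.univ.filter
        (fun p : Fin m × Fin m => p.1 = p.2 ∨ p.1.val = p.2.val + 1),
        chainP m p.1 p.2 true false + chainP m p.1 p.2 false true
          = ((Real.sin (Real.pi / (4 * m)) ^ 2 : ℝ) : ℂ) := by
      intro p hp
      simp only [Finset.mem_filter, Finset.mem_univ, true_and] at hp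
      rw [chainP_eq, chainP_eq]
      have hD : ((Real.pi * p.1.val / m - Real.pi * (2 * p.2.val + 1) / (2 * m)) / 2)
            = -(Real.pi / (4 * m)) ∨
          ((Real.pi * p.1.val / m - Real.pi * (2 * p.2.val + 1) / (2 * m)) / 2)
            = Real.pi / (4 * m) := by
        rcases hp with h | h
        · left
          have : (p.1.val : ℝ) = p.2.val := by rw [h]
          rw [this]; field_simp; ring
        · right
          have : (p.1.val : ℝ) = p.2.val + 1 := by rw [h]; push_cast; ring
          rw [this]; field_simp; ring
      rcases hD with h | h <;> rw [h] <;> push_cast <;> simp [Real.sin_neg] <;> ring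
    rw [Finset.sum_congr rfl hconst, Finset.sum_const, card_filter_total m (by omega)]
    -- last terms
    have hlast : ∀ a : Bool, chainP m ⟨0, by omega⟩ ⟨m - 1, by omega⟩ a a
        = ((Real.sin (Real.pi / (4 * m)) ^ 2 / 2 : ℝ) : ℂ) := by
      intro a
      rw [chainP_eq]
      simp only [if_pos rfl]
      have hcast : ((m - 1 : ℕ) : ℝ) = (m : ℝ) - 1 := by
        have : (1:ℕ) ≤ m := by omega
        push_cast [this]; ring
      have hD : ((Real.pi * ((0:ℕ):ℝ) / m - Real.pi * (2 * ((m-1:ℕ):ℝ) + 1) / (2 * m)) / 2)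
          = Real.pi / (4 * m) - Real.pi / 2 := by
        rw [hcast]; field_simp; ring
      rw [hD]
      rw [show Real.pi / (4 * m) - Real.pi / 2 = -(Real.pi/2 - Real.pi/(4*m)) by ring,
        Real.cos_neg, Real.cos_pi_div_two_sub]
      simp
    rw [hlast, hlast]
    push_cast
    have h1 : ((2 * m - 1 : ℕ) : ℂ) = 2 * (m:ℂ) - 1 := by
      have : (1:ℕ) ≤ 2 * m := by omega
      push_cast [this]; ring
    rw [nsmul_eq_mul, h1]
    ring
  · -- tendsto
    apply squeeze_zero' (g := fun n : ℕ => Real.pi ^ 2 / 8 / n)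
    · filter_upwards [Filter.eventually_ge_atTop 1] with n hn
      positivity
    · filter_upwards [Filter.eventually_ge_atTop 1] with n hn
      have hn0 : (0:ℝ) < n := by exact_mod_cast hn
      have hx : (0:ℝ) ≤ Real.pi / (4 * n) := by positivity
      have hsin : Real.sin (Real.pi / (4 * n)) ≤ Real.pi / (4 * n) := Real.sin_le hx
      have hsin0 : 0 ≤ Real.sin (Real.pi / (4 * n)) := by
        apply Real.sin_nonneg_of_nonneg_of_le_pi hx
        rw [div_le_iff₀ (by positivity)]
        have hn1 : (1:ℝ) ≤ n := by exact_mod_cast hn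
        nlinarith [mul_le_mul_of_nonneg_left (show (1:ℝ) ≤ 4*n by linarith) Real.pi_pos.le]
      have hsq : Real.sin (Real.pi / (4 * n)) ^ 2 ≤ (Real.pi / (4 * n)) ^ 2 := by
        nlinarith
      have : 2 * (n:ℝ) * Real.sin (Real.pi / (4*n)) ^ 2 ≤ 2 * n * (Real.pi / (4*n))^2 := by
        nlinarith
      calc 2 * (n:ℝ) * Real.sin (Real.pi / (4*n)) ^ 2
          ≤ 2 * n * (Real.pi / (4*n))^2 := this
        _ = Real.pi ^ 2 / 8 / n := by field_simp; ring
    · apply Filter.Tendsto.div_atTop (tendsto_const_nhds)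
      exact tendsto_natCast_atTop_atTop
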